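/- arXiv:math/0602353 — 2 statements merged into one kernel-verified Lean document; each statement's English description precedes it below -/
import Mathlib

section
/- Let B be a Blaschke product with zero sequence {zₙ}, let K > 0 and 0 < δ < 1. Let w ∈ 𝔻 be such that β(w, zₙ) > 1 for every n, and suppose there exists ζ ∈ 𝔻 with β(ζ, w) ≤ K and |B(ζ)| > δ. Then |B(w)| ≥ δ^{2e^{2K}}. -/
/-!
Since `|bₙ(z)| = ρ(z, zₙ)`, one has `log |B(z)| = Σₙ log ρ(z, zₙ)`, so it suffices to compare the
factors one at a time. Writing `u(z) = (1 - ρ(z, zₙ)) / (1 + ρ(z, zₙ)) = e^{-2β(z, zₙ)}`, the hyperbolic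
triangle inequality gives `u(w) ≤ e^{2K} u(ζ)`, and `log ρ(z, zₙ)⁻¹ = log ((1 + u) / (1 - u))`.
This last quantity lies between `2u` and `4u` once `u ≤ 1/2`, which the separation `β(w, zₙ) > 1`
guarantees at `z = w`. Hence `log ρ(w, zₙ) ≥ 2 e^{2K} log ρ(ζ, zₙ)`, and summing over `n` gives
`log |B(w)| ≥ 2 e^{2K} log |B(ζ)| > 2 e^{2K} log δ`.
-/

open Complex Metric Set

/-- The open unit disk in the complex plane. -/
def unitDisk : Set ℂ := Metric.ball 0 1

/-- The pseudohyperbolic distance `ρ(z,w) = |(z-w)/(1 - conj(w) z)|`. -/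
noncomputable def pseudoDist (z w : ℂ) : ℝ :=
  ‖(z - w) / (1 - (starRingEnd ℂ) w * z)‖

/-- The hyperbolic distance `β(z,w) = (1/2) log((1+ρ)/(1-ρ))`. -/
noncomputable def hypDist (z w : ℂ) : ℝ :=
  (1 / 2) * Real.log ((1 + pseudoDist z w) / (1 - pseudoDist z w))

/-- A single Blaschke factor with zero `a`. -/
noncomputable def blaschkeFactor (a z : ℂ) : ℂ :=
  ((starRingEnd ℂ) a / (‖a‖ : ℂ)) * ((a - z) / (1 - (starRingEnd ℂ) a * z))

/-- `B` is the Blaschke product with zero sequence `a` (and a factor `z^m`):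
the `aₙ` lie in `𝔻 ∖ {0}` and satisfy the Blaschke condition `Σₙ (1 - |aₙ|) < ∞`. -/
def IsBlaschkeProduct (B : ℂ → ℂ) (m : ℕ) (a : ℕ → ℂ) : Prop :=
  (∀ n, a n ∈ unitDisk ∧ a n ≠ 0) ∧
  Summable (fun n => 1 - ‖a n‖) ∧
  ∀ z ∈ unitDisk, B z = z ^ m * ∏' n, blaschkeFactor (a n) z

lemma mem_unitDisk {z : ℂ} : z ∈ unitDisk ↔ ‖z‖ < 1 := by
  simp [unitDisk]

lemma one_sub_conj_mul_ne_zero {w z : ℂ} (hw : ‖w‖ < 1) (hz : ‖z‖ ≤ 1) :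
    1 - starRingEnd ℂ w * z ≠ 0 := by
  refine sub_ne_zero.mpr fun h => ?_
  have : ‖starRingEnd ℂ w * z‖ < 1 := by
    rw [norm_mul, Complex.norm_conj]
    exact mul_lt_one_of_nonneg_of_lt_one_left (norm_nonneg w) hw hz
  simp [← h] at this

lemma sq_norm_one_sub_conj_mul_sub_sq_norm_sub (z w : ℂ) :
    ‖1 - starRingEnd ℂ w * z‖ ^ 2 - ‖z - w‖ ^ 2 = (1 - ‖z‖ ^ 2) * (1 - ‖w‖ ^ 2) := by
  simp only [Complex.sq_norm, Complex.normSq_apply, Complex.sub_re, Complex.sub_im,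
    Complex.mul_re, Complex.mul_im, Complex.conj_re, Complex.conj_im, Complex.one_re,
    Complex.one_im]
  ring

lemma one_sub_pseudoDist_sq {z w : ℂ} (h : 1 - starRingEnd ℂ w * z ≠ 0) :
    1 - pseudoDist z w ^ 2 = (1 - ‖z‖ ^ 2) * (1 - ‖w‖ ^ 2) / ‖1 - starRingEnd ℂ w * z‖ ^ 2 := by
  rw [pseudoDist, norm_div, div_pow, ← sq_norm_one_sub_conj_mul_sub_sq_norm_sub,
    one_sub_div (pow_ne_zero 2 (norm_ne_zero_iff.mpr h))]

lemma pseudoDist_nonneg (z w : ℂ) : 0 ≤ pseudoDist z w := norm_nonneg _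

lemma pseudoDist_comm (z w : ℂ) : pseudoDist z w = pseudoDist w z := by
  rw [pseudoDist, pseudoDist, norm_div, norm_div, norm_sub_rev,
    ← Complex.norm_conj (1 - starRingEnd ℂ w * z)]
  simp [mul_comm]

lemma pseudoDist_lt_one {z w : ℂ} (hz : ‖z‖ < 1) (hw : ‖w‖ < 1) : pseudoDist z w < 1 := by
  have h := one_sub_pseudoDist_sq (one_sub_conj_mul_ne_zero hw hz.le)
  have : 0 < 1 - pseudoDist z w ^ 2 := by
    rw [h]
    have := norm_pos_iff.mpr (one_sub_conj_mul_ne_zero hw hz.le)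
    have : ‖z‖ ^ 2 < 1 := by nlinarith [norm_nonneg z]
    have : ‖w‖ ^ 2 < 1 := by nlinarith [norm_nonneg w]
    apply div_pos <;> nlinarith
  nlinarith [pseudoDist_nonneg z w]

lemma pseudoDist_le_norm_add_norm_div {u v : ℂ} (hu : ‖u‖ < 1) (hv : ‖v‖ < 1) :
    pseudoDist u v ≤ (‖u‖ + ‖v‖) / (1 + ‖u‖ * ‖v‖) := by
  have hden := one_sub_conj_mul_ne_zero hv hu.le
  have hD : ‖1 - starRingEnd ℂ v * u‖ ≤ 1 + ‖u‖ * ‖v‖ :=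
    (norm_sub_le _ _).trans (by simp [mul_comm])
  have hDpos : 0 < ‖1 - starRingEnd ℂ v * u‖ := norm_pos_iff.mpr hden
  have hpq : 0 < 1 + ‖u‖ * ‖v‖ := by positivity
  have hnum : 0 ≤ (1 - ‖u‖ ^ 2) * (1 - ‖v‖ ^ 2) := by
    apply mul_nonneg <;> nlinarith [norm_nonneg u, norm_nonneg v]
  have hbound : 1 - ((‖u‖ + ‖v‖) / (1 + ‖u‖ * ‖v‖)) ^ 2
      = (1 - ‖u‖ ^ 2) * (1 - ‖v‖ ^ 2) / (1 + ‖u‖ * ‖v‖) ^ 2 := by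
    field_simp
    ring
  have hsq : pseudoDist u v ^ 2 ≤ ((‖u‖ + ‖v‖) / (1 + ‖u‖ * ‖v‖)) ^ 2 := by
    have := div_le_div_of_nonneg_left hnum (by positivity) (pow_le_pow_left₀ hDpos.le hD 2)
    linarith [one_sub_pseudoDist_sq hden]
  exact (pow_le_pow_iff_left₀ (pseudoDist_nonneg u v) (by positivity) two_ne_zero).mp hsq

lemma pseudoDist_moebius {z w x : ℂ} (hz : ‖z‖ < 1) (hw : ‖w‖ < 1) (hx : ‖x‖ < 1) :
    pseudoDist ((z - w) / (1 - starRingEnd ℂ w * z)) ((x - w) / (1 - starRingEnd ℂ w * x))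
      = pseudoDist z x := by
  have hwz := one_sub_conj_mul_ne_zero hw hz.le
  have hwx := one_sub_conj_mul_ne_zero hw hx.le
  have hww := one_sub_conj_mul_ne_zero hw hw.le
  have hxz := one_sub_conj_mul_ne_zero hx hz.le
  have hwx' : 1 - w * starRingEnd ℂ x ≠ 0 := by
    simpa [mul_comm] using (map_ne_zero (starRingEnd ℂ)).mpr hwx
  have hnum : (z - w) / (1 - starRingEnd ℂ w * z) - (x - w) / (1 - starRingEnd ℂ w * x)
      = (z - x) * (1 - starRingEnd ℂ w * w)
        / ((1 - starRingEnd ℂ w * z) * (1 - starRingEnd ℂ w * x)) := by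
    rw [div_sub_div _ _ hwz hwx]
    ring
  have hden : 1 - starRingEnd ℂ ((x - w) / (1 - starRingEnd ℂ w * x))
        * ((z - w) / (1 - starRingEnd ℂ w * z))
      = (1 - starRingEnd ℂ x * z) * (1 - starRingEnd ℂ w * w)
        / ((1 - w * starRingEnd ℂ x) * (1 - starRingEnd ℂ w * z)) := by
    simp only [map_div₀, map_sub, map_mul, map_one, Complex.conj_conj]
    rw [div_mul_div_comm, one_sub_div (mul_ne_zero hwx' hwz)]
    ring
  have hconj : ‖1 - w * starRingEnd ℂ x‖ = ‖1 - starRingEnd ℂ w * x‖ := by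
    rw [← Complex.norm_conj]
    simp [mul_comm]
  rw [pseudoDist, hnum, hden, pseudoDist]
  simp only [norm_div, norm_mul, hconj]
  have := norm_ne_zero_iff.mpr hwz
  have := norm_ne_zero_iff.mpr hwx
  have := norm_ne_zero_iff.mpr hww
  have := norm_ne_zero_iff.mpr hxz
  rw [div_div_div_eq, div_eq_div_iff (by positivity) (by positivity)]
  ring

lemma pseudoDist_le_add_div_one_add_mul {z w x : ℂ} (hz : ‖z‖ < 1) (hw : ‖w‖ < 1)
    (hx : ‖x‖ < 1) :
    pseudoDist z x
      ≤ (pseudoDist z w + pseudoDist w x) / (1 + pseudoDist z w * pseudoDist w x) := by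
  have h := pseudoDist_le_norm_add_norm_div (pseudoDist_lt_one hz hw) (pseudoDist_lt_one hx hw)
  rw [pseudoDist_moebius hz hw hx] at h
  rwa [← pseudoDist_comm x w]

lemma exp_two_mul_hypDist {z w : ℂ} (hz : ‖z‖ < 1) (hw : ‖w‖ < 1) :
    Real.exp (2 * hypDist z w) = (1 + pseudoDist z w) / (1 - pseudoDist z w) := by
  have h0 := pseudoDist_nonneg z w
  have h1 := pseudoDist_lt_one hz hw
  rw [hypDist, ← mul_assoc, mul_one_div_cancel two_ne_zero, one_mul,
    Real.exp_log (div_pos (by linarith) (by linarith))]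

lemma hypDist_triangle {z w x : ℂ} (hz : ‖z‖ < 1) (hw : ‖w‖ < 1) (hx : ‖x‖ < 1) :
    hypDist z x ≤ hypDist z w + hypDist w x := by
  suffices Real.exp (2 * hypDist z x) ≤ Real.exp (2 * (hypDist z w + hypDist w x)) by
    rw [Real.exp_le_exp] at this
    linarith
  rw [mul_add, Real.exp_add, exp_two_mul_hypDist hz hx, exp_two_mul_hypDist hz hw,
    exp_two_mul_hypDist hw hx]
  have key := pseudoDist_le_add_div_one_add_mul hz hw hx
  have hr := pseudoDist_lt_one hz hx
  have hp := pseudoDist_lt_one hz hw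
  have hq := pseudoDist_lt_one hw hx
  have hp0 := pseudoDist_nonneg z w
  have hq0 := pseudoDist_nonneg w x
  rw [le_div_iff₀ (by positivity)] at key
  rw [div_mul_div_comm, div_le_div_iff₀ (by linarith) (by nlinarith)]
  nlinarith

lemma norm_blaschkeFactor {a : ℂ} (ha : a ≠ 0) (z : ℂ) :
    ‖blaschkeFactor a z‖ = pseudoDist z a := by
  rw [blaschkeFactor, pseudoDist, norm_mul, norm_div, Complex.norm_conj, Complex.norm_real,
    Real.norm_of_nonneg (norm_nonneg a), div_self (norm_ne_zero_iff.mpr ha), one_mul,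
    norm_div, norm_div, norm_sub_rev a z]

lemma blaschkeFactor_sub_one {a z : ℂ} (ha : a ≠ 0) (hden : 1 - starRingEnd ℂ a * z ≠ 0) :
    blaschkeFactor a z - 1
      = -((1 - ‖a‖) * (‖a‖ + starRingEnd ℂ a * z) / (‖a‖ * (1 - starRingEnd ℂ a * z))) := by
  have hna : (‖a‖ : ℂ) ≠ 0 := by simpa using ha
  have hsq : starRingEnd ℂ a * a = (‖a‖ : ℂ) ^ 2 := by
    rw [← Complex.normSq_eq_conj_mul_self, ← Complex.sq_norm]
    norm_cast
  rw [blaschkeFactor]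
  field_simp
  linear_combination hsq

lemma norm_blaschkeFactor_sub_one_le {a z : ℂ} (ha : a ≠ 0) (ha1 : ‖a‖ < 1) (hz : ‖z‖ < 1) :
    ‖blaschkeFactor a z - 1‖ ≤ 2 * (1 - ‖a‖) / (1 - ‖z‖) := by
  have hden := one_sub_conj_mul_ne_zero ha1 hz.le
  have ha0 : 0 < ‖a‖ := norm_pos_iff.mpr ha
  have hnum : ‖(‖a‖ : ℂ) + starRingEnd ℂ a * z‖ ≤ 2 * ‖a‖ := by
    refine (norm_add_le _ _).trans ?_
    rw [Complex.norm_real, Real.norm_of_nonneg ha0.le, norm_mul, Complex.norm_conj]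
    nlinarith [norm_nonneg z]
  have hden' : 1 - ‖z‖ ≤ ‖1 - starRingEnd ℂ a * z‖ := by
    refine le_trans ?_ (norm_sub_norm_le _ _)
    rw [norm_one, norm_mul, Complex.norm_conj]
    nlinarith [norm_nonneg z]
  have h1a : ‖(1 : ℂ) - ‖a‖‖ = 1 - ‖a‖ := by
    rw [← Complex.ofReal_one, ← Complex.ofReal_sub, Complex.norm_real,
      Real.norm_of_nonneg (by linarith)]
  rw [blaschkeFactor_sub_one ha hden, norm_neg, norm_div, norm_mul, norm_mul, h1a,
    Complex.norm_real, Real.norm_of_nonneg ha0.le]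
  calc (1 - ‖a‖) * ‖(‖a‖ : ℂ) + starRingEnd ℂ a * z‖ / (‖a‖ * ‖1 - starRingEnd ℂ a * z‖)
      ≤ (1 - ‖a‖) * (2 * ‖a‖) / (‖a‖ * (1 - ‖z‖)) := by
        gcongr
    _ = 2 * (1 - ‖a‖) / (1 - ‖z‖) := by
        field_simp

namespace IsBlaschkeProduct

variable {B : ℂ → ℂ} {m : ℕ} {a : ℕ → ℂ} {z : ℂ}

lemma summable_norm_blaschkeFactor_sub_one (hB : IsBlaschkeProduct B m a) (hz : ‖z‖ < 1) :
    Summable fun n => ‖blaschkeFactor (a n) z - 1‖ := by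
  refine ((hB.2.1.mul_left (2 / (1 - ‖z‖)))).of_nonneg_of_le (fun _ => norm_nonneg _) fun n => ?_
  have ha := hB.1 n
  calc ‖blaschkeFactor (a n) z - 1‖ ≤ 2 * (1 - ‖a n‖) / (1 - ‖z‖) :=
        norm_blaschkeFactor_sub_one_le ha.2 (mem_unitDisk.mp ha.1) hz
    _ = 2 / (1 - ‖z‖) * (1 - ‖a n‖) := by ring

lemma norm_eq_tprod (hB : IsBlaschkeProduct B m a) (hz : z ∈ unitDisk) :
    ‖B z‖ = ‖z‖ ^ m * ∏' n, pseudoDist z (a n) := by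
  have hmul : Multipliable fun n => blaschkeFactor (a n) z := by
    simpa using multipliable_one_add_of_summable
      (hB.summable_norm_blaschkeFactor_sub_one (mem_unitDisk.mp hz))
  rw [hB.2.2 z hz, norm_mul, norm_pow, hmul.norm_tprod]
  simp_rw [norm_blaschkeFactor (hB.1 _).2]

lemma summable_log_pseudoDist (hB : IsBlaschkeProduct B m a) (hz : ‖z‖ < 1) :
    Summable fun n => Real.log (pseudoDist z (a n)) := by
  simpa [norm_blaschkeFactor (hB.1 _).2] using
    (hB.summable_norm_blaschkeFactor_sub_one hz).summable_log_norm_one_add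

lemma pseudoDist_pos (hB : IsBlaschkeProduct B m a) (hz : z ∈ unitDisk) (hBz : B z ≠ 0)
    (n : ℕ) : 0 < pseudoDist z (a n) := by
  refine (pseudoDist_nonneg _ _).lt_of_ne' fun h => hBz ?_
  rw [← norm_eq_zero, hB.norm_eq_tprod hz, tprod_of_exists_eq_zero ⟨n, h⟩, mul_zero]

lemma norm_eq_exp_tsum (hB : IsBlaschkeProduct B 0 a) (hz : z ∈ unitDisk)
    (hpos : ∀ n, 0 < pseudoDist z (a n)) :
    ‖B z‖ = Real.exp (∑' n, Real.log (pseudoDist z (a n))) := by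
  rw [hB.norm_eq_tprod hz, pow_zero, one_mul,
    Real.rexp_tsum_eq_tprod hpos (hB.summable_log_pseudoDist (mem_unitDisk.mp hz))]

end IsBlaschkeProduct

lemma pseudoDist_pos_of_hypDist_pos {z w : ℂ} (h : 0 < hypDist z w) : 0 < pseudoDist z w := by
  refine (pseudoDist_nonneg z w).lt_of_ne' fun h0 => h.ne' ?_
  simp [hypDist, h0]

lemma log_one_add_div_one_sub_le {u : ℝ} (hu0 : 0 ≤ u) (hu : u ≤ 1 / 2) :
    Real.log ((1 + u) / (1 - u)) ≤ 4 * u := by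
  have h := Real.log_div_le_sum_range_add hu0 (by linarith) 0
  simp only [Finset.range_zero, Finset.sum_empty, zero_add, mul_zero, pow_one] at h
  have : u / (1 - u ^ 2) ≤ 2 * u := by
    rw [div_le_iff₀ (by nlinarith)]
    nlinarith
  linarith

lemma two_mul_le_log_one_add_div_one_sub {v : ℝ} (hv0 : 0 ≤ v) (hv : v < 1) :
    2 * v ≤ Real.log ((1 + v) / (1 - v)) := by
  have h := Real.sum_range_le_log_div hv0 hv 1
  simp only [Finset.range_one, Finset.sum_singleton] at h
  norm_num at h
  linarith

lemma one_add_inv_div_one_sub_inv {x : ℝ} (hx0 : 0 < x) (hx1 : x < 1) :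
    (1 + ((1 + x) / (1 - x))⁻¹) / (1 - ((1 + x) / (1 - x))⁻¹) = x⁻¹ := by
  have : 1 - x ≠ 0 := by linarith
  field_simp
  ring_nf
  exact mul_inv_cancel₀ hx0.ne'

lemma two_mul_mul_log_le_log {s t c : ℝ} (hs0 : 0 < s) (hs1 : s < 1) (ht0 : 0 < t) (ht1 : t < 1)
    (hc : 0 ≤ c) (ht : 2 ≤ (1 + t) / (1 - t)) (hst : (1 + s) / (1 - s) ≤ c * ((1 + t) / (1 - t))) :
    2 * c * Real.log s ≤ Real.log t := by
  have hS1 : 1 < (1 + s) / (1 - s) := by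
    rw [lt_div_iff₀ (by linarith)]
    linarith
  set u := ((1 + t) / (1 - t))⁻¹
  set v := ((1 + s) / (1 - s))⁻¹
  have hu : u ≤ 1 / 2 := by
    rw [inv_le_comm₀ (by linarith) (by norm_num)]
    linarith
  have huv : u ≤ c * v := by
    rw [show c * v = c / ((1 + s) / (1 - s)) from (div_eq_mul_inv _ _).symm,
      le_div_iff₀ (by linarith), inv_mul_le_iff₀ (by linarith), mul_comm]
    exact hst
  have hlog_t : -Real.log t = Real.log ((1 + u) / (1 - u)) := by
    rw [one_add_inv_div_one_sub_inv ht0 ht1, Real.log_inv]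
  have hlog_s : -Real.log s = Real.log ((1 + v) / (1 - v)) := by
    rw [one_add_inv_div_one_sub_inv hs0 hs1, Real.log_inv]
  have := log_one_add_div_one_sub_le (by positivity) hu
  have := two_mul_le_log_one_add_div_one_sub (by positivity) (inv_lt_one_of_one_lt₀ hS1)
  nlinarith

lemma two_mul_exp_mul_log_pseudoDist_le {ζ w a : ℂ} {K : ℝ} (hζ : ‖ζ‖ < 1) (hw : ‖w‖ < 1)
    (ha : ‖a‖ < 1) (hsep : 1 < hypDist w a) (hζa : 0 < pseudoDist ζ a)
    (hζw : hypDist ζ w ≤ K) :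
    2 * Real.exp (2 * K) * Real.log (pseudoDist ζ a) ≤ Real.log (pseudoDist w a) := by
  refine two_mul_mul_log_le_log hζa (pseudoDist_lt_one hζ ha)
    (pseudoDist_pos_of_hypDist_pos (by linarith)) (pseudoDist_lt_one hw ha) (Real.exp_pos _).le
    ?_ ?_
  · rw [← exp_two_mul_hypDist hw ha]
    linarith [Real.add_one_le_exp (2 * hypDist w a)]
  · rw [← exp_two_mul_hypDist hζ ha, ← exp_two_mul_hypDist hw ha, ← Real.exp_add,
      Real.exp_le_exp]
    linarith [hypDist_triangle hζ hw ha]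

theorem blaschke_lower_bound_general
    (B : ℂ → ℂ) (a : ℕ → ℂ) (hB : IsBlaschkeProduct B 0 a)
    (K δ : ℝ) (hδ0 : 0 < δ)
    (w : ℂ) (hw : w ∈ unitDisk) (hsep : ∀ n, 1 < hypDist w (a n))
    (ζ : ℂ) (hζ : ζ ∈ unitDisk) (hζw : hypDist ζ w ≤ K)
    (hζB : δ < ‖B ζ‖) :
    δ ^ (2 * Real.exp (2 * K)) ≤ ‖B w‖ := by
  have hs := hB.pseudoDist_pos hζ (norm_pos_iff.mp (hδ0.trans hζB))
  have ht n : 0 < pseudoDist w (a n) := pseudoDist_pos_of_hypDist_pos (one_pos.trans (hsep n))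
  have hfactor n := two_mul_exp_mul_log_pseudoDist_le (mem_unitDisk.mp hζ) (mem_unitDisk.mp hw)
    (mem_unitDisk.mp (hB.1 n).1) (hsep n) (hs n) hζw
  rw [hB.norm_eq_exp_tsum hζ hs, ← Real.log_lt_iff_lt_exp hδ0] at hζB
  rw [hB.norm_eq_exp_tsum hw ht, Real.rpow_def_of_pos hδ0, Real.exp_le_exp]
  calc Real.log δ * (2 * Real.exp (2 * K))
      ≤ 2 * Real.exp (2 * K) * ∑' n, Real.log (pseudoDist ζ (a n)) := by
        rw [mul_comm]
        gcongr
    _ = ∑' n, 2 * Real.exp (2 * K) * Real.log (pseudoDist ζ (a n)) := tsum_mul_left.symm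
    _ ≤ ∑' n, Real.log (pseudoDist w (a n)) :=
        Summable.tsum_le_tsum hfactor
          ((hB.summable_log_pseudoDist (mem_unitDisk.mp hζ)).mul_left _)
          (hB.summable_log_pseudoDist (mem_unitDisk.mp hw))

/-- If `B` is a Blaschke product with zero sequence `{zₙ}`, `w ∈ 𝔻` satisfies
`β(w, zₙ) > 1` for all `n`, and there is `ζ ∈ 𝔻` with `β(ζ,w) ≤ K` and `|B(ζ)| > δ`,
then `|B(w)| ≥ δ^(2 e^{2K})`. -/
theorem blaschke_lower_bound
    (B : ℂ → ℂ) (a : ℕ → ℂ) (hB : IsBlaschkeProduct B 0 a)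
    (K δ : ℝ) (hK : 0 < K) (hδ0 : 0 < δ) (hδ1 : δ < 1)
    (w : ℂ) (hw : w ∈ unitDisk) (hsep : ∀ n, 1 < hypDist w (a n))
    (ζ : ℂ) (hζ : ζ ∈ unitDisk) (hζw : hypDist ζ w ≤ K)
    (hζB : δ < ‖B ζ‖) :
    δ ^ (2 * Real.exp (2 * K)) ≤ ‖B w‖ :=
  blaschke_lower_bound_general B a hB K δ hδ0 w hw hsep ζ hζ hζw hζB
end

section
/- Let z ∈ 𝔻 and let n ≥ 1 be an integer with 2^{n−1}(1−|z|) ≤ 1. Then for every ξ ∈ 𝔻 with ξ ∉ 2^{n−1}Q_z one has |1 − conj(ξ)z| ≥ 2^{n−3}·(1−|z|). -/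
/-! With `ℓ = 2^{n-1}(1-|z|)` the bound is `ℓ/4`, and in fact `ℓ ≤ |1 - ξ̄z|`. If `1 - |ξ| ≥ ℓ`
this is `|1 - ξ̄z| ≥ 1 - |ξ|`. Otherwise `ξ` is in the radial range of the square, so it must be
angularly far from `z`: since `ξ = |ξ| e^{i(arg z - arg w)}` for `w = ξ̄z`, leaving the square
forces `|arg w| ≥ πℓ`. Finally `|1 - w| ≥ |arg w| / π` for every `w`, by
`|1 - w|² = 1 - 2|w| cos (arg w) + |w|²` and `cos φ ≤ 1 - 2φ²/π²` on `[-π, π]`. -/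

open Complex Metric Set

/-- A Carleson square with angular center `θ₀` and side length `ℓ`. -/
def carlesonSquare (θ₀ ℓ : ℝ) : Set ℂ :=
  {z | ∃ r θ : ℝ, 0 < 1 - r ∧ 1 - r < ℓ ∧ |θ - θ₀| < Real.pi * ℓ ∧
    z = r * Complex.exp (θ * Complex.I)}

open scoped Real ComplexConjugate

theorem abs_arg_div_pi_le_norm_one_sub (w : ℂ) : |arg w| / π ≤ ‖1 - w‖ := by
  have hsq : ‖1 - w‖ ^ 2 = 1 - 2 * (‖w‖ * Real.cos (arg w)) + ‖w‖ ^ 2 := by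
    rw [norm_mul_cos_arg, Complex.sq_norm, Complex.sq_norm, normSq_apply, normSq_apply]
    simp only [sub_re, sub_im, one_re, one_im]
    ring
  have hcos := Real.cos_le_one_sub_mul_cos_sq (abs_arg_le_pi w)
  set t := |arg w| / π
  have ht0 : 0 ≤ t := by positivity
  have ht1 : t ≤ 1 := div_le_one_of_le₀ (abs_arg_le_pi w) Real.pi_pos.le
  have hct : 2 / π ^ 2 * arg w ^ 2 = 2 * t ^ 2 := by
    rw [div_pow, sq_abs]; field_simp
  -- If `cos (arg w) ≤ 0` then `‖1 - w‖² ≥ 1`, otherwise `‖1 - w‖² ≥ 1 - cos² (arg w) ≥ 2t²`.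
  have : t ^ 2 ≤ ‖1 - w‖ ^ 2 := by
    rw [hsq]
    have := Real.neg_one_le_cos (arg w)
    rcases le_or_gt (Real.cos (arg w)) 0 with hc | hc
    · nlinarith [norm_nonneg w]
    · nlinarith [sq_nonneg (‖w‖ - Real.cos (arg w))]
  exact pow_le_pow_iff_left₀ ht0 (norm_nonneg _) two_ne_zero |>.1 this

theorem one_sub_norm_le_norm_one_sub_conj_mul {ξ z : ℂ} (hz : ‖z‖ ≤ 1) :
    1 - ‖ξ‖ ≤ ‖1 - conj ξ * z‖ := by
  have : ‖conj ξ * z‖ ≤ ‖ξ‖ := by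
    rw [norm_mul, norm_conj]
    exact mul_le_of_le_one_right (norm_nonneg ξ) hz
  linarith [norm_sub_norm_le 1 (conj ξ * z), norm_one (α := ℂ)]

theorem exp_arg_mul_I {x : ℂ} (hx : x ≠ 0) : exp (arg x * I) = x / ‖x‖ :=
  eq_div_of_mul_eq (by exact_mod_cast norm_ne_zero_iff.mpr hx)
    (by rw [mul_comm, norm_mul_exp_arg_mul_I])

theorem norm_mul_exp_arg_sub_arg_conj_mul {z : ℂ} (hz : z ≠ 0) (ξ : ℂ) :
    ‖ξ‖ * exp ((arg z - arg (conj ξ * z) : ℝ) * I) = ξ := by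
  rcases eq_or_ne ξ 0 with rfl | hξ
  · simp
  have hw : conj ξ * z ≠ 0 := mul_ne_zero (by simpa using hξ) hz
  rw [ofReal_sub, sub_mul, exp_sub, exp_arg_mul_I hz, exp_arg_mul_I hw, norm_mul, norm_conj]
  have hzn : (‖z‖ : ℂ) ≠ 0 := by exact_mod_cast norm_ne_zero_iff.mpr hz
  have hξc : conj ξ ≠ 0 := by simpa using hξ
  push_cast
  field_simp
  exact (conj_mul' ξ).symm

theorem mem_carlesonSquare_arg_of_abs_arg_conj_mul_lt {z ξ : ℂ} {ℓ : ℝ} (hz : z ≠ 0)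
    (hξ : ‖ξ‖ < 1) (hrad : 1 - ‖ξ‖ < ℓ) (hang : |arg (conj ξ * z)| < π * ℓ) :
    ξ ∈ carlesonSquare (arg z) ℓ :=
  ⟨‖ξ‖, arg z - arg (conj ξ * z), by linarith, hrad, by rwa [sub_sub_cancel_left, abs_neg],
    (norm_mul_exp_arg_sub_arg_conj_mul hz ξ).symm⟩

theorem outside_dilated_square_bound_general
    (z : ℂ) (hz : z ∈ unitDisk) (n : ℕ)
    (hside : (2:ℝ) ^ ((n:ℤ) - 1) * (1 - ‖z‖) ≤ 1)
    (ξ : ℂ) (hξ : ξ ∈ unitDisk)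
    (hout : ξ ∉ carlesonSquare (Complex.arg z) ((2:ℝ) ^ ((n:ℤ) - 1) * (1 - ‖z‖))) :
    (2:ℝ) ^ ((n:ℤ) - 3) * (1 - ‖z‖) ≤
      ‖1 - (starRingEnd ℂ) ξ * z‖ := by
  have hz1 : ‖z‖ < 1 := mem_ball_zero_iff.1 hz
  set ℓ := (2:ℝ) ^ ((n:ℤ) - 1) * (1 - ‖z‖)
  have hℓ : 0 ≤ ℓ := mul_nonneg (by positivity) (by linarith)
  have hquarter : (2:ℝ) ^ ((n:ℤ) - 3) * (1 - ‖z‖) = ℓ / 4 := by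
    rw [show (n:ℤ) - 3 = (n:ℤ) - 1 + (-2) by ring, zpow_add₀ two_ne_zero]
    ring
  suffices ℓ ≤ ‖1 - conj ξ * z‖ by linarith
  rcases eq_or_ne z 0 with rfl | hz0
  · simpa using hside
  by_cases hrad : ℓ ≤ 1 - ‖ξ‖
  · exact hrad.trans (one_sub_norm_le_norm_one_sub_conj_mul hz1.le)
  have hang : π * ℓ ≤ |arg (conj ξ * z)| := not_lt.1 fun h ↦
    hout <| mem_carlesonSquare_arg_of_abs_arg_conj_mul_lt hz0 (mem_ball_zero_iff.1 hξ)
      (not_le.1 hrad) h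
  calc ℓ ≤ |arg (conj ξ * z)| / π := by rw [le_div_iff₀ Real.pi_pos]; linarith
    _ ≤ ‖1 - conj ξ * z‖ := abs_arg_div_pi_le_norm_one_sub _

/-- Let `z ∈ 𝔻` and `n ≥ 1` with `2^{n-1}(1-|z|) ≤ 1`. Then for every `ξ ∈ 𝔻`
with `ξ ∉ 2^{n-1}Q_z` one has `|1 - conj(ξ)z| ≥ 2^{n-3}(1-|z|)`.
Here `2^{n-1}Q_z` is the Carleson square with angular center `arg z` and side length
`2^{n-1}(1-|z|)`. -/
theorem outside_dilated_square_bound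
    (z : ℂ) (hz : z ∈ unitDisk) (n : ℕ) (hn : 1 ≤ n)
    (hside : (2:ℝ) ^ ((n:ℤ) - 1) * (1 - ‖z‖) ≤ 1)
    (ξ : ℂ) (hξ : ξ ∈ unitDisk)
    (hout : ξ ∉ carlesonSquare (Complex.arg z) ((2:ℝ) ^ ((n:ℤ) - 1) * (1 - ‖z‖))) :
    (2:ℝ) ^ ((n:ℤ) - 3) * (1 - ‖z‖) ≤
      ‖1 - (starRingEnd ℂ) ξ * z‖ :=
  outside_dilated_square_bound_general z hz n hside ξ hξ hout
end
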